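/- arXiv:1906.09729 — 2 statements merged into one kernel-verified Lean document; each statement's English description precedes it below -/
import Mathlib

section
/- Let L be an integrable real random variable on a probability space (Ω,𝓕,P), let 0 < a < 1 and 0 ≤ b < 1, and set λ(a,b) = (1−a)/(1−ab). Then the optimized certainty equivalent satisfies R_{a,b}(L) = (1−b)·ES_{λ(a,b)}(L) + b·E[L]. -/
open MeasureTheory Filter Topology Real Set
open scoped ENNReal

/-- Left-quantile function: `q_L(u) = inf {m : P[L ≤ m] ≥ u}`. -/
noncomputable def leftQuantile {Ω : Type*} [MeasurableSpace Ω] (P : Measure Ω)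
    (L : Ω → ℝ) (u : ℝ) : ℝ :=
  sInf {m : ℝ | u ≤ (P {ω | L ω ≤ m}).toReal}

/-- Expected shortfall: `ES_α(L) = (1/(1-α)) ∫_α^1 q_L(u) du`. -/
noncomputable def ES {Ω : Type*} [MeasurableSpace Ω] (P : Measure Ω)
    (L : Ω → ℝ) (α : ℝ) : ℝ :=
  (1 - α)⁻¹ * ∫ u in α..1, leftQuantile P L u

/-- The α-expectile is the (unique) `e` with `α E[(L-e)⁺] = (1-α) E[(L-e)⁻]`. -/
def IsExpectile {Ω : Type*} [MeasurableSpace Ω] (P : Measure Ω)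
    (L : Ω → ℝ) (α e : ℝ) : Prop :=
  α * ∫ ω, max (L ω - e) 0 ∂P = (1 - α) * ∫ ω, max (e - L ω) 0 ∂P

/-- Loss function `ℓ_{a,b}(x) = x⁺/a - b x⁻`. -/
noncomputable def lossFn (a b x : ℝ) : ℝ := max x 0 / a - b * max (-x) 0

/-- Optimized certainty equivalent `R_{a,b}(L) = inf { m + E[ℓ_{a,b}(L-m)] }`. -/
noncomputable def OCE {Ω : Type*} [MeasurableSpace Ω] (P : Measure Ω)
    (L : Ω → ℝ) (a b : ℝ) : ℝ :=
  sInf {r : ℝ | ∃ m : ℝ, r = m + ∫ ω, lossFn a b (L ω - m) ∂P}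

/-- `g` is regularly varying at infinity with index `ρ`. -/
def RegularlyVarying (g : ℝ → ℝ) (ρ : ℝ) : Prop :=
  ∀ x : ℝ, 0 < x → Tendsto (fun t => g (t * x) / g t) atTop (𝓝 (x ^ ρ))

/-- `g` is of second-order regular variation with indices `-η`, `ρ` and auxiliary function `A`. -/
def SecondOrderRV (g : ℝ → ℝ) (η ρ : ℝ) (A : ℝ → ℝ) : Prop :=
  RegularlyVarying g (-η) ∧
  Tendsto A atTop (𝓝 0) ∧
  ((∀ᶠ t in atTop, 0 < A t) ∨ (∀ᶠ t in atTop, A t < 0)) ∧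
  ∀ x : ℝ, 0 < x →
    Tendsto (fun t => (g (t * x) / g t - x ^ (-η)) / A t) atTop
      (𝓝 (if ρ = 0 then x ^ (-η) * Real.log x else x ^ (-η) * (x ^ ρ - 1) / ρ))

/-- Empirical measure `(1/n) ∑_{k<n} δ_{L_k(ω)}` of the first `n` samples. -/
noncomputable def empMeasure {Ω : Type*} [MeasurableSpace Ω] (L : ℕ → Ω → ℝ)
    (n : ℕ) (ω : Ω) : Measure ℝ :=
  (n : ℝ≥0∞)⁻¹ • ∑ k ∈ Finset.range n, Measure.dirac (L k ω)

/-!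
Since `ℓ_{a,b}(x) = (1/a - b) x⁺ + b x` and `1 - λ = a (1 - b) / (1 - a b)`, the OCE objective is
`m + E[ℓ_{a,b}(L - m)] = (1 - b) (m + E[(L - m)⁺] / (1 - λ)) + b E[L]`, an increasing affine image of
the Rockafellar–Uryasev objective, whose minimum over `m` is `ES_λ(L)`. The latter is proved by the
quantile transform: `q_L(U)` has the law of `L` for `U` uniform on `(0, 1)`, so
`E[(L - m)⁺] = ∫₀¹ (q_L(u) - m)⁺ du ≥ ∫_λ¹ (q_L(u) - m) du`, with equality at `m = q_L(λ)` because
`q_L` is nondecreasing.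
-/

open ProbabilityTheory

theorem sInf_setOf_le_cdf_le_iff {μ : Measure ℝ} [IsProbabilityMeasure μ] {u x : ℝ}
    (hu : u ∈ Ioo 0 1) : sInf {y | u ≤ cdf μ y} ≤ x ↔ u ≤ cdf μ x := by
  have hne : {y | u ≤ cdf μ y}.Nonempty :=
    ((tendsto_cdf_atTop μ).eventually (eventually_ge_nhds hu.2)).exists
  have hbdd : BddBelow {y | u ≤ cdf μ y} := by
    obtain ⟨y₀, hy₀⟩ :=
      ((tendsto_cdf_atBot μ).eventually (eventually_lt_nhds hu.1)).exists_forall_of_atBot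
    exact ⟨y₀, fun y hy => le_of_not_gt fun hlt => (hy₀ y hlt.le).not_ge hy⟩
  refine ⟨fun h => ?_, fun h => csInf_le hbdd h⟩
  have hright : ∀ y ∈ Ioi x, u ≤ cdf μ y := fun y hy => by
    obtain ⟨z, hz, hzy⟩ := exists_lt_of_csInf_lt hne (h.trans_lt hy)
    exact hz.trans (monotone_cdf μ hzy.le)
  exact ge_of_tendsto (((cdf μ).right_continuous x).mono Ioi_subset_Ici_self)
    (eventually_nhdsWithin_of_forall hright)

theorem volume_Ioo_inter_Iic {c : ℝ} (hc : c ∈ Icc 0 1) :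
    volume (Ioo 0 1 ∩ Iic c) = ENNReal.ofReal c := by
  refine le_antisymm ?_ ?_
  · calc volume (Ioo 0 1 ∩ Iic c) ≤ volume (Ioc 0 c) := measure_mono fun u hu => ⟨hu.1.1, hu.2⟩
      _ = ENNReal.ofReal c := by simp
  · calc ENNReal.ofReal c = volume (Ioo 0 c) := by simp
      _ ≤ volume (Ioo 0 1 ∩ Iic c) :=
        measure_mono fun u hu => ⟨⟨hu.1, hu.2.trans_le hc.2⟩, hu.2.le⟩

section Quantile

variable {Ω : Type*} [MeasurableSpace Ω] {P : Measure Ω} [IsProbabilityMeasure P] {L : Ω → ℝ}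

theorem leftQuantile_eq_sInf_cdf (hL : AEMeasurable L P) (u : ℝ) :
    leftQuantile P L u = sInf {x | u ≤ cdf (P.map L) x} := by
  have := Measure.isProbabilityMeasure_map hL
  simp only [leftQuantile, cdf_eq_real, measureReal_def,
    Measure.map_apply_of_aemeasurable hL measurableSet_Iic]
  rfl

theorem leftQuantile_le_iff (hL : AEMeasurable L P) {u x : ℝ} (hu : u ∈ Ioo 0 1) :
    leftQuantile P L u ≤ x ↔ u ≤ cdf (P.map L) x := by
  have := Measure.isProbabilityMeasure_map hL
  rw [leftQuantile_eq_sInf_cdf hL]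
  exact sInf_setOf_le_cdf_le_iff hu

theorem monotoneOn_leftQuantile (hL : AEMeasurable L P) :
    MonotoneOn (leftQuantile P L) (Ioo 0 1) := fun _ hu _ hv huv =>
  (leftQuantile_le_iff hL hu).2 (huv.trans ((leftQuantile_le_iff hL hv).1 le_rfl))

theorem aemeasurable_leftQuantile (hL : AEMeasurable L P) :
    AEMeasurable (leftQuantile P L) (volume.restrict (Ioo 0 1)) :=
  aemeasurable_restrict_of_monotoneOn measurableSet_Ioo (monotoneOn_leftQuantile hL)

theorem map_leftQuantile (hL : AEMeasurable L P) :
    (volume.restrict (Ioo 0 1)).map (leftQuantile P L) = P.map L := by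
  have := Measure.isProbabilityMeasure_map hL
  refine (Measure.ext_of_Iic _ _ fun x => ?_).symm
  have hpre : leftQuantile P L ⁻¹' Iic x ∩ Ioo 0 1 = Ioo 0 1 ∩ Iic (cdf (P.map L) x) := by
    ext u
    simp only [mem_inter_iff, mem_preimage, mem_Iic]
    exact ⟨fun ⟨hq, hu⟩ => ⟨hu, (leftQuantile_le_iff hL hu).1 hq⟩,
      fun ⟨hu, hF⟩ => ⟨(leftQuantile_le_iff hL hu).2 hF, hu⟩⟩
  rw [Measure.map_apply_of_aemeasurable (aemeasurable_leftQuantile hL) measurableSet_Iic,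
    Measure.restrict_apply' measurableSet_Ioo, hpre,
    volume_Ioo_inter_Iic ⟨cdf_nonneg _ x, cdf_le_one _ x⟩, ofReal_cdf]

theorem integral_comp_leftQuantile (hL : AEMeasurable L P) {g : ℝ → ℝ}
    (hg : AEStronglyMeasurable g (P.map L)) :
    ∫ u in Ioo 0 1, g (leftQuantile P L u) = ∫ ω, g (L ω) ∂P := by
  rw [← integral_map (aemeasurable_leftQuantile hL) (by rwa [map_leftQuantile hL]),
    map_leftQuantile hL, integral_map hL hg]

theorem integrableOn_comp_leftQuantile (hL : AEMeasurable L P) {g : ℝ → ℝ}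
    (hg : AEStronglyMeasurable g (P.map L)) (hgL : Integrable (g ∘ L) P) :
    IntegrableOn (g ∘ leftQuantile P L) (Ioo 0 1) := by
  rw [← integrable_map_measure hg hL, ← map_leftQuantile hL] at hgL
  exact hgL.comp_aemeasurable (aemeasurable_leftQuantile hL)

end Quantile

section ExpectedShortfall

variable {Ω : Type*} [MeasurableSpace Ω] {P : Measure Ω} [IsProbabilityMeasure P] {L : Ω → ℝ}
  {α : ℝ}

theorem integrableOn_leftQuantile (hL : Integrable L P) :
    IntegrableOn (leftQuantile P L) (Ioo 0 1) :=
  integrableOn_comp_leftQuantile hL.1.aemeasurable (g := id) aestronglyMeasurable_id hL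

theorem integral_Ioo_leftQuantile_sub (hL : Integrable L P) (hα : α ∈ Icc 0 1) (m : ℝ) :
    ∫ u in Ioo α 1, (leftQuantile P L u - m) =
      (∫ u in Ioo α 1, leftQuantile P L u) - (1 - α) * m := by
  rw [integral_sub ((integrableOn_leftQuantile hL).mono_set (Ioo_subset_Ioo_left hα.1))
      (integrableOn_const measure_Ioo_lt_top.ne),
    setIntegral_const, Real.volume_real_Ioo_of_le hα.2, smul_eq_mul]

theorem integral_Ioo_leftQuantile_sub_le (hL : Integrable L P) (hα : 0 ≤ α) (m : ℝ) :
    ∫ u in Ioo α 1, (leftQuantile P L u - m) ≤ ∫ ω, max (L ω - m) 0 ∂P := by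
  have hg : Continuous fun x : ℝ => max (x - m) 0 := by fun_prop
  have hpos : IntegrableOn (fun u => max (leftQuantile P L u - m) 0) (Ioo 0 1) :=
    integrableOn_comp_leftQuantile hL.1.aemeasurable hg.aestronglyMeasurable
      (hL.sub (integrable_const m)).pos_part
  calc ∫ u in Ioo α 1, (leftQuantile P L u - m)
      ≤ ∫ u in Ioo α 1, max (leftQuantile P L u - m) 0 :=
        setIntegral_mono_on
          (((integrableOn_leftQuantile hL).sub (integrableOn_const measure_Ioo_lt_top.ne)).mono_set
            (Ioo_subset_Ioo_left hα))
          (hpos.mono_set (Ioo_subset_Ioo_left hα)) measurableSet_Ioo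
          fun u _ => le_max_left _ _
    _ ≤ ∫ u in Ioo 0 1, max (leftQuantile P L u - m) 0 :=
        setIntegral_mono_set hpos (Eventually.of_forall fun u => le_max_right _ _)
          (Ioo_subset_Ioo_left hα).eventuallyLE
    _ = ∫ ω, max (L ω - m) 0 ∂P :=
        integral_comp_leftQuantile hL.1.aemeasurable hg.aestronglyMeasurable

/-- `(q_L(u) - q_L(α))⁺` vanishes for `u ≤ α` and equals `q_L(u) - q_L(α)` for `u > α`. -/
theorem integral_Ioo_leftQuantile_sub_leftQuantile (hL : Integrable L P) (hα : α ∈ Ioo 0 1) :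
    ∫ u in Ioo α 1, (leftQuantile P L u - leftQuantile P L α) =
      ∫ ω, max (L ω - leftQuantile P L α) 0 ∂P := by
  have hmono := monotoneOn_leftQuantile hL.1.aemeasurable
  rw [← integral_comp_leftQuantile hL.1.aemeasurable (g := fun x => max (x - _) 0)
      (by fun_prop),
    setIntegral_eq_of_subset_of_forall_sdiff_eq_zero measurableSet_Ioo
      (Ioo_subset_Ioo_left hα.1.le)]
  · refine setIntegral_congr_fun measurableSet_Ioo fun u hu => ?_
    exact (max_eq_left (sub_nonneg.2 (hmono hα ⟨hα.1.trans hu.1, hu.2⟩ hu.1.le))).symm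
  · rintro u ⟨hu, hnot⟩
    have huα : u ≤ α := le_of_not_gt fun h => hnot ⟨h, hu.2⟩
    exact max_eq_right (sub_nonpos.2 (hmono hu hα huα))

/-- Rockafellar–Uryasev; the minimum is attained at `m = q_L(α)`. -/
theorem isLeast_expectedShortfall (hL : Integrable L P) (hα : α ∈ Ioo 0 1) :
    IsLeast (range fun m => m + (1 - α)⁻¹ * ∫ ω, max (L ω - m) 0 ∂P) (ES P L α) := by
  have hα' : α ∈ Icc 0 1 := Ioo_subset_Icc_self hα
  have hpos : 0 < 1 - α := sub_pos.2 hα.2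
  have hES : ES P L α = (1 - α)⁻¹ * ∫ u in Ioo α 1, leftQuantile P L u := by
    rw [ES, intervalIntegral.integral_of_le hα.2.le, integral_Ioc_eq_integral_Ioo]
  refine ⟨⟨leftQuantile P L α, ?_⟩, ?_⟩
  · dsimp only
    rw [← integral_Ioo_leftQuantile_sub_leftQuantile hL hα, integral_Ioo_leftQuantile_sub hL hα',
      hES]
    field_simp
    ring
  · rintro _ ⟨m, rfl⟩
    have hle := integral_Ioo_leftQuantile_sub_le hL hα.1.le m
    rw [integral_Ioo_leftQuantile_sub hL hα'] at hle
    calc ES P L α ≤ (1 - α)⁻¹ * ((1 - α) * m + ∫ ω, max (L ω - m) 0 ∂P) := by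
          rw [hES]; gcongr; linarith
      _ = m + (1 - α)⁻¹ * ∫ ω, max (L ω - m) 0 ∂P := by field_simp

end ExpectedShortfall

theorem lossFn_eq {a : ℝ} (ha : a ≠ 0) (b x : ℝ) :
    lossFn a b x = (a⁻¹ - b) * max x 0 + b * x := by
  have hneg : max (-x) 0 = max x 0 - x := by linarith [max_zero_sub_max_neg_zero_eq_self x]
  rw [lossFn, hneg]
  field_simp
  ring

theorem integral_lossFn_sub {Ω : Type*} [MeasurableSpace Ω] {P : Measure Ω}
    [IsProbabilityMeasure P] {L : Ω → ℝ} (hL : Integrable L P) {a : ℝ} (ha : a ≠ 0) (b m : ℝ) :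
    ∫ ω, lossFn a b (L ω - m) ∂P =
      (a⁻¹ - b) * ∫ ω, max (L ω - m) 0 ∂P + b * (∫ ω, L ω ∂P - m) := by
  have hsub : Integrable (fun ω => L ω - m) P := hL.sub (integrable_const m)
  simp_rw [lossFn_eq ha]
  rw [integral_add (hsub.pos_part.const_mul _) (hsub.const_mul _), integral_const_mul,
    integral_const_mul, integral_sub hL (integrable_const m), integral_const, probReal_univ,
    one_smul]

theorem oce_eq_expectedShortfall_general {Ω : Type*} [MeasurableSpace Ω] (P : Measure Ω)
    [IsProbabilityMeasure P] (L : Ω → ℝ) (hL : Integrable L P)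
    (a b : ℝ) (ha : 0 < a) (ha1 : a < 1) (hb1 : b < 1) :
    OCE P L a b =
      (1 - b) * ES P L ((1 - a) / (1 - a * b)) + b * ∫ ω, L ω ∂P := by
  set α := (1 - a) / (1 - a * b) with hα_def
  have hab : 0 < 1 - a * b := by nlinarith
  have hα : α ∈ Ioo 0 1 := ⟨div_pos (by linarith) hab, (div_lt_one hab).2 (by nlinarith)⟩
  have hscale : (1 - b) * (1 - α)⁻¹ = a⁻¹ - b := by
    have h1α : 1 - α = a * (1 - b) / (1 - a * b) := by
      rw [hα_def]
      field_simp
      ring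
    have hb1' : 1 - b ≠ 0 := by linarith
    rw [h1α, inv_div]
    field_simp
  have hmono : Monotone fun t => (1 - b) * t + b * ∫ ω, L ω ∂P :=
    (monotone_id.const_mul (sub_nonneg.2 hb1.le)).add_const _
  have hobjective : ∀ m, m + ∫ ω, lossFn a b (L ω - m) ∂P =
      (1 - b) * (m + (1 - α)⁻¹ * ∫ ω, max (L ω - m) 0 ∂P) + b * ∫ ω, L ω ∂P := fun m => by
    rw [integral_lossFn_sub hL ha.ne', ← hscale]
    ring
  have hset : {r | ∃ m, r = m + ∫ ω, lossFn a b (L ω - m) ∂P} =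
      (fun t => (1 - b) * t + b * ∫ ω, L ω ∂P) ''
        range fun m => m + (1 - α)⁻¹ * ∫ ω, max (L ω - m) 0 ∂P := by
    rw [← range_comp]
    ext r
    simp only [mem_ofPred_eq, mem_range, Function.comp_apply, hobjective, eq_comm]
  rw [OCE, hset]
  exact (hmono.map_isLeast (isLeast_expectedShortfall hL hα)).csInf_eq

/-- `R_{a,b}(L) = (1-b)·ES_{λ(a,b)}(L) + b·E[L]` with `λ(a,b) = (1-a)/(1-a*b)`. -/
theorem oce_eq_expectedShortfall {Ω : Type*} [MeasurableSpace Ω] (P : Measure Ω)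
    [IsProbabilityMeasure P] (L : Ω → ℝ) (hL : Integrable L P)
    (a b : ℝ) (ha : 0 < a) (ha1 : a < 1) (hb : 0 ≤ b) (hb1 : b < 1) :
    OCE P L a b =
      (1 - b) * ES P L ((1 - a) / (1 - a * b)) + b * ∫ ω, L ω ∂P :=
  oce_eq_expectedShortfall_general P L hL a b ha ha1 hb1
end

section
/- Let L be an integrable real random variable with E[L] = 0 whose distribution function F has finite right endpoint x̂ = sup{x : F(x) < 1} < ∞ and belongs to the Weibull maximum domain of attraction MDA(Ψ_η) for some η > 0, i.e. the function t ↦ 1 − F(x̂ − 1/t) is regularly varying at infinity with index −η. Then, as α ↗ 1: (i) (1−α)/(1−β*) → 0, where β* = P[L ≤ e_α(L)]; and (ii) (x̂ − ES_α(L))/(x̂ − e_α(L)) → 0. -/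
open MeasureTheory Filter Topology Real Set
open scoped ENNReal

/-!
Everything depends only on the law `μ` of `L`, so the argument runs on `μ = P.map L` with
distribution function `F = cdf μ`. Regular variation with `η > 0` rules out `L = 0` a.s., so
`c₀ = E[L⁻] > 0`. The expectile equation then gives
`(1 - α) c₀ ≤ α E[(L - e_α)⁺] ≤ (x̂ - e_α)(1 - F(e_α))` and forces `e_α ↑ x̂`, which is (i).
For (ii), regular variation gives `(1 - F(x̂ - λ(x̂ - e_α))) / (1 - F(e_α)) → λ^η > 0`, whereas
`1 - F(q_α) ≤ 1 - α = o(1 - F(e_α))`; hence `x̂ - q_α < λ (x̂ - e_α)` eventually for every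
`λ > 0`, and `q_α ≤ ES_α ≤ x̂`.
-/
open ProbabilityTheory

lemma RegularlyVarying.index_eq_zero_of_eventually_const {g : ℝ → ℝ} {ρ c : ℝ}
    (hg : RegularlyVarying g ρ) (hc : c ≠ 0) (hconst : ∀ᶠ t in atTop, g t = c) : ρ = 0 := by
  have hone : Tendsto (fun t => g (t * 2) / g t) atTop (𝓝 1) := by
    refine tendsto_const_nhds.congr' ?_
    filter_upwards [hconst, (tendsto_id.atTop_mul_const two_pos).eventually hconst]
      with t h1 h2
    rw [id] at h2
    rw [h1, h2, div_self hc]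
  have h2 : (2 : ℝ) ^ ρ = 2 ^ (0 : ℝ) := by
    rw [rpow_zero]; exact tendsto_nhds_unique (hg 2 two_pos) hone
  exact (rpow_right_inj two_pos (by norm_num)).1 h2

lemma RegularlyVarying.tendsto_ratio_near_endpoint {G : ℝ → ℝ} {xhat η : ℝ}
    (hrv : RegularlyVarying (fun t => G (xhat - 1 / t)) (-η))
    {ι : Type*} {l : Filter ι} {y : ι → ℝ} (hy : Tendsto y l (𝓝[<] xhat)) {c : ℝ}
    (hc : 0 < c) :
    Tendsto (fun i => G (xhat - c * (xhat - y i)) / G (y i)) l (𝓝 (c ^ η)) := by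
  have hgap : Tendsto (fun i => xhat - y i) l (𝓝[>] 0) := by
    refine tendsto_nhdsWithin_iff.2 ⟨?_, ?_⟩
    · simpa using (tendsto_nhds_of_tendsto_nhdsWithin hy).const_sub xhat
    · filter_upwards [hy self_mem_nhdsWithin] with i hi
      exact sub_pos.2 (show y i < xhat from hi)
  have h := (hrv c⁻¹ (inv_pos.2 hc)).comp (tendsto_inv_nhdsGT_zero.comp hgap)
  rw [inv_rpow hc.le, rpow_neg hc.le, inv_inv] at h
  refine h.congr fun i => ?_
  simp only [Function.comp_apply, one_div, mul_inv, inv_inv]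
  congr 3 <;> ring

section Transfer

variable {Ω : Type*} [MeasurableSpace Ω] {P : Measure Ω} {L : Ω → ℝ}

lemma measure_map_id_le (hL : AEMeasurable L P) (m : ℝ) :
    P.map L {x | id x ≤ m} = P {ω | L ω ≤ m} :=
  Measure.map_apply_of_aemeasurable hL measurableSet_Iic

lemma cdf_map [IsProbabilityMeasure P] (hL : AEMeasurable L P) (m : ℝ) :
    cdf (P.map L) m = (P {ω | L ω ≤ m}).toReal := by
  have := Measure.isProbabilityMeasure_map hL
  rw [cdf_eq_real, measureReal_def, ← measure_map_id_le hL]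
  rfl

lemma leftQuantile_map (hL : AEMeasurable L P) : leftQuantile (P.map L) id = leftQuantile P L := by
  funext u
  simp only [leftQuantile, measure_map_id_le hL]

lemma ES_map (hL : AEMeasurable L P) : ES (P.map L) id = ES P L := by
  funext α
  rw [ES, ES, leftQuantile_map hL]

lemma isExpectile_map_iff (hL : AEMeasurable L P) {α e : ℝ} :
    IsExpectile (P.map L) id α e ↔ IsExpectile P L α e := by
  simp only [IsExpectile, id]
  rw [integral_map hL (by fun_prop), integral_map hL (by fun_prop)]

lemma integrable_map_id (hL : Integrable L P) : Integrable id (P.map L) :=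
  (integrable_map_measure aestronglyMeasurable_id hL.aemeasurable).2 hL

lemma integral_map_id (hL : Integrable L P) : ∫ x, x ∂(P.map L) = ∫ ω, L ω ∂P :=
  integral_map hL.aemeasurable aestronglyMeasurable_id

end Transfer

lemma cdf_dirac (a x : ℝ) : cdf (Measure.dirac a) x = if a ≤ x then 1 else 0 := by
  rw [cdf_eq_real, measureReal_def, Measure.dirac_apply' _ measurableSet_Iic]
  by_cases h : a ≤ x <;> simp [h]

section Endpoint

variable {μ : Measure ℝ} {xhat : ℝ}

lemma cdf_lt_one_of_lt (hx : IsLUB {x | cdf μ x < 1} xhat) {m : ℝ} (hm : m < xhat) :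
    cdf μ m < 1 := by
  obtain ⟨y, hy, hmy, -⟩ := hx.exists_between hm
  exact (monotone_cdf μ hmy.le).trans_lt hy

lemma cdf_eq_one_of_isLUB (hx : IsLUB {x | cdf μ x < 1} xhat) : cdf μ xhat = 1 := by
  have hright : Tendsto (cdf μ) (𝓝[>] xhat) (𝓝 (cdf μ xhat)) :=
    ((cdf μ).right_continuous xhat).mono Ioi_subset_Ici_self
  refine tendsto_nhds_unique hright (tendsto_const_nhds.congr' ?_)
  filter_upwards [self_mem_nhdsWithin] with y hy
  exact (le_antisymm (cdf_le_one μ y) (not_lt.1 fun h => not_le.2 hy (hx.1 h))).symm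

lemma cdf_eq_one_iff_ae_le [IsProbabilityMeasure μ] {b : ℝ} :
    cdf μ b = 1 ↔ ∀ᵐ x ∂μ, x ≤ b := by
  rw [← ENNReal.ofReal_eq_one, ofReal_cdf, ← prob_compl_eq_zero_iff measurableSet_Iic]
  exact mem_ae_iff.symm

end Endpoint

lemma MonotoneOn.intervalAverage_mem_Icc {f : ℝ → ℝ} {a b : ℝ} (hab : a < b)
    (hf : MonotoneOn f (Icc a b)) : (b - a)⁻¹ * ∫ u in a..b, f u ∈ Icc (f a) (f b) := by
  have hint : IntervalIntegrable f volume a b :=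
    MonotoneOn.intervalIntegrable (by rwa [uIcc_of_le hab.le])
  have hlow : ∫ _ in a..b, f a ≤ ∫ u in a..b, f u :=
    intervalIntegral.integral_mono_on hab.le intervalIntegrable_const hint
      fun u hu => hf ⟨le_rfl, hab.le⟩ hu hu.1
  have hup : ∫ u in a..b, f u ≤ ∫ _ in a..b, f b :=
    intervalIntegral.integral_mono_on hab.le hint intervalIntegrable_const
      fun u hu => hf hu ⟨hab.le, le_rfl⟩ hu.2
  rw [intervalIntegral.integral_const, smul_eq_mul] at hlow hup
  have hpos : 0 < b - a := sub_pos.2 hab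
  constructor
  · rw [le_inv_mul_iff₀ hpos]; linarith
  · rw [inv_mul_le_iff₀ hpos]; linarith

section Quantile

variable {μ : Measure ℝ} {u v b : ℝ}

lemma leftQuantile_id_eq [IsProbabilityMeasure μ] (u : ℝ) :
    leftQuantile μ id u = sInf {m | u ≤ cdf μ m} := by
  simp only [leftQuantile, cdf_eq_real, measureReal_def]
  rfl

lemma bddBelow_setOf_le_cdf (hu : 0 < u) : BddBelow {m | u ≤ cdf μ m} := by
  obtain ⟨m₀, hm₀⟩ :=
    Filter.eventually_atBot.1 ((tendsto_cdf_atBot μ).eventually (gt_mem_nhds hu))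
  exact ⟨m₀, fun m hm => not_lt.1 fun hlt => (hm₀ m hlt.le).not_ge hm⟩

lemma leftQuantile_id_le [IsProbabilityMeasure μ] (hu : 0 < u) (hb : u ≤ cdf μ b) :
    leftQuantile μ id u ≤ b := by
  rw [leftQuantile_id_eq]
  exact csInf_le (bddBelow_setOf_le_cdf hu) hb

lemma leftQuantile_id_le_leftQuantile_id [IsProbabilityMeasure μ] (hu : 0 < u) (huv : u ≤ v)
    (hv : v ≤ cdf μ b) :
    leftQuantile μ id u ≤ leftQuantile μ id v := by
  rw [leftQuantile_id_eq, leftQuantile_id_eq]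
  exact csInf_le_csInf (bddBelow_setOf_le_cdf hu) ⟨b, hv⟩ fun m hm => huv.trans hm

lemma le_cdf_leftQuantile_id [IsProbabilityMeasure μ] (hb : u ≤ cdf μ b) :
    u ≤ cdf μ (leftQuantile μ id u) := by
  set q := leftQuantile μ id u with hq
  have hright : Tendsto (cdf μ) (𝓝[>] q) (𝓝 (cdf μ q)) :=
    ((cdf μ).right_continuous q).mono Ioi_subset_Ici_self
  refine ge_of_tendsto hright ?_
  filter_upwards [self_mem_nhdsWithin] with y hy
  rw [hq, leftQuantile_id_eq] at hy
  obtain ⟨m, hm, hmy⟩ := exists_lt_of_csInf_lt ⟨b, hb⟩ hy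
  exact hm.trans (monotone_cdf μ hmy.le)

lemma leftQuantile_id_le_ES_le [IsProbabilityMeasure μ] (hb : cdf μ b = 1) {α : ℝ}
    (hα : 0 < α) (hα1 : α < 1) :
    leftQuantile μ id α ≤ ES μ id α ∧ ES μ id α ≤ b := by
  have hmono : MonotoneOn (leftQuantile μ id) (Icc α 1) := fun u hu v hv huv =>
    leftQuantile_id_le_leftQuantile_id (hα.trans_le hu.1) huv (hv.2.trans hb.ge)
  have h := hmono.intervalAverage_mem_Icc hα1
  exact ⟨h.1, h.2.trans (leftQuantile_id_le one_pos hb.ge)⟩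

end Quantile

section Expectile

variable {μ : Measure ℝ} [IsProbabilityMeasure μ] {α e b c : ℝ}

lemma integrable_max_sub (hint : Integrable id μ) (m : ℝ) :
    Integrable (fun x => max (x - m) 0) μ :=
  (hint.sub (integrable_const m)).pos_part

lemma integrable_max_sub' (hint : Integrable id μ) (m : ℝ) :
    Integrable (fun x => max (m - x) 0) μ :=
  ((integrable_const m).sub hint).pos_part

lemma integral_max_sub_sub_integral_max_sub (hint : Integrable id μ) (m : ℝ) :
    ∫ x, max (x - m) 0 ∂μ - ∫ x, max (m - x) 0 ∂μ = ∫ x, x ∂μ - m := by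
  rw [← integral_sub (integrable_max_sub hint m) (integrable_max_sub' hint m)]
  have h : ∀ x : ℝ, max (x - m) 0 - max (m - x) 0 = x - m := fun x => by
    simpa [neg_sub] using max_zero_sub_max_neg_zero_eq_self (x - m)
  simp only [h]
  rw [integral_sub (show Integrable (fun x => x) μ from hint) (integrable_const m), integral_const]
  simp

lemma antitone_integral_max_sub (hint : Integrable id μ) :
    Antitone fun m => ∫ x, max (x - m) 0 ∂μ := fun a b hab =>
  integral_mono (integrable_max_sub hint b) (integrable_max_sub hint a)
    fun x => max_le_max (by linarith) le_rfl

lemma monotone_integral_max_sub' (hint : Integrable id μ) :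
    Monotone fun m => ∫ x, max (m - x) 0 ∂μ := fun a b hab =>
  integral_mono (integrable_max_sub' hint a) (integrable_max_sub' hint b)
    fun x => max_le_max (by linarith) le_rfl

lemma integral_max_sub_pos (hint : Integrable id μ) {m : ℝ} (hm : cdf μ m < 1) :
    0 < ∫ x, max (x - m) 0 ∂μ := by
  refine (integral_nonneg fun _ => le_max_right _ _).lt_of_ne fun h => hm.ne ?_
  have hz := (integral_eq_zero_iff_of_nonneg (fun _ => le_max_right _ _)
    (integrable_max_sub hint m)).1 h.symm
  refine cdf_eq_one_iff_ae_le.2 ?_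
  filter_upwards [hz] with x hx
  simpa using hx

lemma integral_max_sub_le_mul (hint : Integrable id μ) (hle : ∀ᵐ x ∂μ, x ≤ b) {m : ℝ}
    (hm : m ≤ b) : ∫ x, max (x - m) 0 ∂μ ≤ (b - m) * (1 - cdf μ m) := by
  calc ∫ x, max (x - m) 0 ∂μ ≤ ∫ x, (Ioi m).indicator (fun _ => b - m) x ∂μ := by
        refine integral_mono_ae (integrable_max_sub hint m)
          ((integrable_const _).indicator measurableSet_Ioi) ?_
        filter_upwards [hle] with x hx
        by_cases h : m < x
        · simp [h, hx, hm]
        · simp [h, not_lt.1 h]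
    _ = (b - m) * (1 - cdf μ m) := by
        rw [integral_indicator_const _ measurableSet_Ioi, smul_eq_mul, ← compl_Iic,
          probReal_compl_eq_one_sub measurableSet_Iic, cdf_eq_real, mul_comm]

lemma IsExpectile.nonneg (hint : Integrable id μ) (hmean : ∫ x, x ∂μ = 0)
    (he : IsExpectile μ id α e) (hα : 1 / 2 ≤ α) (hα1 : α < 1) : 0 ≤ e := by
  have hid := integral_max_sub_sub_integral_max_sub hint e
  have hA : 0 ≤ ∫ x, max (x - e) 0 ∂μ := integral_nonneg fun _ => le_max_right _ _
  have he' : α * ∫ x, max (x - e) 0 ∂μ = (1 - α) * ∫ x, max (e - x) 0 ∂μ := he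
  nlinarith

lemma IsExpectile.lt_of_ae_le (hint : Integrable id μ) (he : IsExpectile μ id α e)
    (hα1 : α < 1) (he0 : 0 ≤ e) (hle : ∀ᵐ x ∂μ, x ≤ b)
    (hc0 : 0 < ∫ x, max (-x) 0 ∂μ) : e < b := by
  by_contra! hbe
  have hA : ∫ x, max (x - e) 0 ∂μ = 0 := integral_eq_zero_of_ae <| by
    filter_upwards [hle] with x hx
    exact max_eq_right (by linarith)
  have hB : ∫ x, max (-x) 0 ∂μ ≤ ∫ x, max (e - x) 0 ∂μ := by
    simpa using monotone_integral_max_sub' hint he0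
  have he' : α * ∫ x, max (x - e) 0 ∂μ = (1 - α) * ∫ x, max (e - x) 0 ∂μ := he
  rw [hA, mul_zero] at he'
  nlinarith

lemma IsExpectile.integral_max_sub_le (hint : Integrable id μ) (he : IsExpectile μ id α e)
    (hα : 1 / 2 ≤ α) (hα1 : α ≤ 1) (hec : e ≤ c) (heb : e ≤ b) :
    ∫ x, max (x - c) 0 ∂μ ≤ 2 * (1 - α) * ∫ x, max (b - x) 0 ∂μ := by
  have hA := antitone_integral_max_sub hint hec
  have hB := monotone_integral_max_sub' hint heb
  have hA0 : 0 ≤ ∫ x, max (x - e) 0 ∂μ := integral_nonneg fun _ => le_max_right _ _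
  have he' : α * ∫ x, max (x - e) 0 ∂μ = (1 - α) * ∫ x, max (e - x) 0 ∂μ := he
  simp only at hA hB
  nlinarith

lemma IsExpectile.one_sub_mul_le (hint : Integrable id μ) (he : IsExpectile μ id α e)
    (hα1 : α ≤ 1) (he0 : 0 ≤ e) (heb : e ≤ b) (hle : ∀ᵐ x ∂μ, x ≤ b) :
    (1 - α) * ∫ x, max (-x) 0 ∂μ ≤ (b - e) * (1 - cdf μ e) := by
  have hB : ∫ x, max (-x) 0 ∂μ ≤ ∫ x, max (e - x) 0 ∂μ := by
    simpa using monotone_integral_max_sub' hint he0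
  have hA0 : 0 ≤ ∫ x, max (x - e) 0 ∂μ := integral_nonneg fun _ => le_max_right _ _
  have hA := integral_max_sub_le_mul hint hle heb
  have he' : α * ∫ x, max (x - e) 0 ∂μ = (1 - α) * ∫ x, max (e - x) 0 ∂μ := he
  nlinarith

end Expectile

section WeibullDomain

variable {μ : Measure ℝ} [IsProbabilityMeasure μ] {xhat η : ℝ} {e : ℝ → ℝ}

lemma integral_max_neg_pos (hint : Integrable id μ) (hmean : ∫ x, x ∂μ = 0)
    (hx : IsLUB {x | cdf μ x < 1} xhat) (hη : η ≠ 0)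
    (hrv : RegularlyVarying (fun t => 1 - cdf μ (xhat - 1 / t)) (-η)) :
    0 < ∫ x, max (-x) 0 ∂μ := by
  refine (integral_nonneg fun _ => le_max_right _ _).lt_of_ne fun h => hη ?_
  have hnonneg : 0 ≤ᵐ[μ] id := by
    have hz := (integral_eq_zero_iff_of_nonneg (fun _ => le_max_right _ _) hint.neg.pos_part).1
      h.symm
    filter_upwards [hz] with x hx
    simpa using hx
  have hzero : id =ᵐ[μ] fun _ => (0 : ℝ) :=
    (integral_eq_zero_iff_of_nonneg_ae hnonneg hint).1 hmean
  have hμ : μ = Measure.dirac 0 := by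
    calc μ = μ.map id := Measure.map_id.symm
      _ = μ.map fun _ => (0 : ℝ) := Measure.map_congr hzero
      _ = Measure.dirac 0 := by simp [Measure.map_const]
  have hconst : ∀ᶠ t in atTop, 1 - cdf μ (xhat - 1 / t) = 1 := by
    filter_upwards [eventually_gt_atTop 0] with t ht
    have hlt := cdf_lt_one_of_lt hx (show xhat - 1 / t < xhat by simp [ht])
    rw [hμ, cdf_dirac] at hlt ⊢
    split_ifs at hlt ⊢
    · norm_num at hlt
    · norm_num
  simpa using hrv.index_eq_zero_of_eventually_const one_ne_zero hconst

variable (hint : Integrable id μ) (hmean : ∫ x, x ∂μ = 0) (hx : IsLUB {x | cdf μ x < 1} xhat)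
  (hc0 : 0 < ∫ x, max (-x) 0 ∂μ)
  (he : ∀ α, 1 / 2 ≤ α → α < 1 → IsExpectile μ id α (e α))
include hint hmean hx hc0 he

lemma expectile_mem_Ico {α : ℝ} (h₁ : 1 / 2 ≤ α) (h₂ : α < 1) : e α ∈ Ico 0 xhat := by
  have he0 := (he α h₁ h₂).nonneg hint hmean h₁ h₂
  exact ⟨he0, (he α h₁ h₂).lt_of_ae_le hint h₂ he0
    (cdf_eq_one_iff_ae_le.1 (cdf_eq_one_of_isLUB hx)) hc0⟩

lemma tendsto_expectile_nhdsLT : Tendsto e (𝓝[<] 1) (𝓝[<] xhat) := by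
  have hα : ∀ᶠ α in 𝓝[<] (1 : ℝ), α ∈ Ioo (1 / 2) 1 := Ioo_mem_nhdsLT (by norm_num)
  have hlt : ∀ᶠ α in 𝓝[<] (1 : ℝ), e α < xhat :=
    hα.mono fun α h => (expectile_mem_Ico hint hmean hx hc0 he h.1.le h.2).2
  refine tendsto_nhdsWithin_iff.2
    ⟨tendsto_order.2 ⟨fun c hc => ?_, fun c hc => hlt.mono fun α h => h.trans hc⟩, hlt⟩
  have hsmall :
      Tendsto (fun α => 2 * (1 - α) * ∫ x, max (xhat - x) 0 ∂μ) (𝓝[<] 1) (𝓝 0) := by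
    refine Tendsto.mono_left ?_ nhdsWithin_le_nhds
    exact ((continuous_const.sub continuous_id).const_mul 2 |>.mul continuous_const).tendsto' _ _
      (by simp)
  filter_upwards [hα, hlt, hsmall.eventually (gt_mem_nhds (integral_max_sub_pos hint
    (cdf_lt_one_of_lt hx hc)))] with α hα hlt hsmall
  by_contra! hec
  exact ((he α hα.1.le hα.2).integral_max_sub_le hint hα.1.le hα.2.le hec hlt.le).not_gt hsmall

lemma tendsto_sub_expectile_div :
    Tendsto (fun α => (xhat - e α) / ∫ x, max (-x) 0 ∂μ) (𝓝[<] 1) (𝓝 0) := by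
  simpa using ((tendsto_nhds_of_tendsto_nhdsWithin
    (tendsto_expectile_nhdsLT hint hmean hx hc0 he)).const_sub xhat).div_const _

lemma eventually_one_sub_le_mul_one_sub_cdf : ∀ᶠ α in 𝓝[<] (1 : ℝ),
    1 - α ≤ (xhat - e α) / (∫ x, max (-x) 0 ∂μ) * (1 - cdf μ (e α)) := by
  filter_upwards [Ioo_mem_nhdsLT (show (1 / 2 : ℝ) < 1 by norm_num)] with α hα
  have hmem := expectile_mem_Ico hint hmean hx hc0 he hα.1.le hα.2
  have h := (he α hα.1.le hα.2).one_sub_mul_le hint hα.2.le hmem.1 hmem.2.le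
    (cdf_eq_one_iff_ae_le.1 (cdf_eq_one_of_isLUB hx))
  rw [div_mul_eq_mul_div, le_div_iff₀ hc0]
  linarith

lemma tendsto_one_sub_div_one_sub_cdf_expectile :
    Tendsto (fun α => (1 - α) / (1 - cdf μ (e α))) (𝓝[<] 1) (𝓝 0) := by
  refine squeeze_zero' ?_ ?_ (tendsto_sub_expectile_div hint hmean hx hc0 he)
  · filter_upwards [self_mem_nhdsWithin] with α (hα : α < 1)
    exact div_nonneg (sub_nonneg.2 hα.le) (sub_nonneg.2 (cdf_le_one μ _))
  · filter_upwards [tendsto_expectile_nhdsLT hint hmean hx hc0 he self_mem_nhdsWithin,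
      eventually_one_sub_le_mul_one_sub_cdf hint hmean hx hc0 he] with α (hlt : e α < xhat) h
    exact (div_le_iff₀ (sub_pos.2 (cdf_lt_one_of_lt hx hlt))).2 h

lemma tendsto_sub_leftQuantile_div_sub_expectile
    (hrv : RegularlyVarying (fun t => 1 - cdf μ (xhat - 1 / t)) (-η)) :
    Tendsto (fun α => (xhat - leftQuantile μ id α) / (xhat - e α)) (𝓝[<] 1) (𝓝 0) := by
  have hlim := tendsto_expectile_nhdsLT hint hmean hx hc0 he
  have hx1 := cdf_eq_one_of_isLUB hx
  have hα : ∀ᶠ α in 𝓝[<] (1 : ℝ), α ∈ Ioo (1 / 2) 1 := Ioo_mem_nhdsLT (by norm_num)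
  have hlt : ∀ᶠ α in 𝓝[<] (1 : ℝ), e α < xhat := hlim self_mem_nhdsWithin
  refine tendsto_order.2 ⟨fun c hc => ?_, fun ε hε => ?_⟩
  · filter_upwards [hα, hlt] with α hα hlt
    refine hc.trans_le (div_nonneg ?_ (sub_pos.2 hlt).le)
    exact sub_nonneg.2 (leftQuantile_id_le (by linarith [hα.1]) (hx1 ▸ hα.2.le))
  have hpow : 0 < ε ^ η := rpow_pos_of_pos hε η
  have hgap : ∀ᶠ α in 𝓝[<] (1 : ℝ),
      (xhat - e α) / ∫ x, max (-x) 0 ∂μ < ε ^ η / 2 :=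
    (tendsto_sub_expectile_div hint hmean hx hc0 he).eventually (gt_mem_nhds (half_pos hpow))
  have hratio : ∀ᶠ α in 𝓝[<] (1 : ℝ),
      ε ^ η / 2 < (1 - cdf μ (xhat - ε * (xhat - e α))) / (1 - cdf μ (e α)) :=
    (RegularlyVarying.tendsto_ratio_near_endpoint (G := fun y => 1 - cdf μ y) hrv hlim
      hε).eventually (lt_mem_nhds (half_lt_self hpow))
  filter_upwards [hα, hlt, eventually_one_sub_le_mul_one_sub_cdf hint hmean hx hc0 he, hgap,
    hratio] with α hα hlt hbound hgapα hratioα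
  rw [div_lt_iff₀ (sub_pos.2 hlt)]
  by_contra! hq
  -- `q_α ≤ x̂ - ε (x̂ - e_α)` would push the tail at `x̂ - ε (x̂ - e_α)` below `1 - α`
  have hqα := le_cdf_leftQuantile_id (hx1 ▸ hα.2.le : α ≤ cdf μ xhat)
  have hmono :=
    monotone_cdf μ (show leftQuantile μ id α ≤ xhat - ε * (xhat - e α) by linarith)
  have hS : 0 < 1 - cdf μ (e α) := sub_pos.2 (cdf_lt_one_of_lt hx hlt)
  rw [lt_div_iff₀ hS] at hratioα
  linarith [mul_lt_mul_of_pos_right hgapα hS]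

lemma tendsto_sub_ES_div_sub_expectile
    (hrv : RegularlyVarying (fun t => 1 - cdf μ (xhat - 1 / t)) (-η)) :
    Tendsto (fun α => (xhat - ES μ id α) / (xhat - e α)) (𝓝[<] 1) (𝓝 0) := by
  have hlt : ∀ᶠ α in 𝓝[<] (1 : ℝ), e α < xhat :=
    tendsto_expectile_nhdsLT hint hmean hx hc0 he self_mem_nhdsWithin
  have hES : ∀ᶠ α in 𝓝[<] (1 : ℝ), leftQuantile μ id α ≤ ES μ id α ∧ ES μ id α ≤ xhat := by
    filter_upwards [Ioo_mem_nhdsLT (show (0 : ℝ) < 1 by norm_num)] with α hα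
    exact leftQuantile_id_le_ES_le (cdf_eq_one_of_isLUB hx) hα.1 hα.2
  refine tendsto_of_tendsto_of_tendsto_of_le_of_le' tendsto_const_nhds
    (tendsto_sub_leftQuantile_div_sub_expectile hint hmean hx hc0 he hrv) ?_ ?_
  · filter_upwards [hlt, hES] with α hlt hES
    exact div_nonneg (sub_nonneg.2 hES.2) (sub_pos.2 hlt).le
  · filter_upwards [hlt, hES] with α hlt hES
    exact div_le_div_of_nonneg_right (by linarith [hES.1]) (sub_pos.2 hlt).le

end WeibullDomain

/-- for centered `L` in the Weibull MDA (`t ↦ 1-F(x̂-1/t) ∈ RV_{-η}`) with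
finite right endpoint `x̂`, as `α ↗ 1`: `(1-α)/(1-β*) → 0` with `β* = P[L ≤ e_α(L)]`,
and `(x̂ - ES_α(L))/(x̂ - e_α(L)) → 0`. -/
theorem weibull_first_order {Ω : Type*} [MeasurableSpace Ω] (P : Measure Ω)
    [IsProbabilityMeasure P] (L : Ω → ℝ) (hL : Integrable L P)
    (hmean : (∫ ω, L ω ∂P) = 0) (xhat : ℝ)
    (hxhat : IsLUB {x : ℝ | (P {ω | L ω ≤ x}).toReal < 1} xhat)
    (η : ℝ) (hη : 0 < η)
    (hrv : RegularlyVarying (fun t => 1 - (P {ω | L ω ≤ xhat - 1 / t}).toReal) (-η))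
    (e : ℝ → ℝ) (he : ∀ α : ℝ, 1 / 2 ≤ α → α < 1 → IsExpectile P L α (e α)) :
    Tendsto (fun α => (1 - α) / (1 - (P {ω | L ω ≤ e α}).toReal))
        (𝓝[<] (1 : ℝ)) (𝓝 0) ∧
      Tendsto (fun α => (xhat - ES P L α) / (xhat - e α)) (𝓝[<] (1 : ℝ)) (𝓝 0) := by
  have hLm := hL.aemeasurable
  have := Measure.isProbabilityMeasure_map hLm
  simp only [← cdf_map hLm] at hxhat hrv ⊢
  rw [← ES_map hLm]
  have hint := integrable_map_id hL
  have hmean' : ∫ x, x ∂(P.map L) = 0 := (integral_map_id hL).trans hmean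
  have he' α (h₁ : 1 / 2 ≤ α) (h₂ : α < 1) : IsExpectile (P.map L) id α (e α) :=
    (isExpectile_map_iff hLm).2 (he α h₁ h₂)
  have hc0 := integral_max_neg_pos hint hmean' hxhat hη.ne' hrv
  exact ⟨tendsto_one_sub_div_one_sub_cdf_expectile hint hmean' hxhat hc0 he',
    tendsto_sub_ES_div_sub_expectile hint hmean' hxhat hc0 he' hrv⟩
end
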